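/- Let k be algebraically closed of characteristic p ≠ 2. Every elementary subalgebra ε of sp_{2n}(k) (an abelian Lie subalgebra of pairwise commuting elements whose p-th matrix powers vanish) satisfies dim ε ≤ n(n+1)/2, and this bound is attained by the nilpotent radical of the parabolic subalgebra corresponding to the last simple root, namely the subalgebra of matrices [[0, B],[0, 0]] with B symmetric n×n. -/

import Mathlib

/-!
Induction on `n` by symplectic reduction. An elementary subalgebra `a` acts on `V = k^{2n}` by
commuting nilpotent endomorphisms that are skew for the symplectic form `ω`, so by Engel's theorem
they have a common null vector `v ≠ 0`. They preserve `v^⊥ ⊇ k v` and induce commuting nilpotent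
skew endomorphisms of the `2(n-1)`-dimensional symplectic space `v^⊥ / k v`, so the image of `a`
there has dimension at most `(n-1)n/2` by induction. An element `X` of the kernel maps `v^⊥` into
`k v`, hence is determined by `X u` for any `u` with `ω v u = 1`; and
`ω (X u) (Y u) = -ω u (X Y u) = -ω u (Y X u) = ω (Y u) (X u)`, so away from characteristic `2`
these vectors span an isotropic subspace, of dimension at most `n`. Hence
`dim a ≤ (n-1)n/2 + n = n(n+1)/2`. The bound is attained by the symmetric upper right blocks,
whose pairwise products vanish.
-/

open Matrix

attribute [local instance 100] LieRing.ofAssociativeRing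

/-- The matrix of the standard symplectic form, `[[0, I],[-I, 0]]`. -/
def Jstd (k : Type*) [Field k] (n : ℕ) :
    Matrix (Fin n ⊕ Fin n) (Fin n ⊕ Fin n) k :=
  Matrix.fromBlocks 0 1 (-1) 0

/-- The set of block matrices `[[0, B],[0, 0]]` with `B` symmetric `n × n`:
the nilpotent radical of the parabolic of `sp_{2n}` at the last simple root. -/
def symBlockSet (k : Type*) [Field k] (n : ℕ) :
    Set (Matrix (Fin n ⊕ Fin n) (Fin n ⊕ Fin n) k) :=
  {X | ∃ B : Matrix (Fin n) (Fin n) k, Bᵀ = B ∧ X = Matrix.fromBlocks 0 B 0 0}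

open Module Submodule

theorem Submodule.exists_ne_zero_forall_apply_eq_zero {k V : Type*} [Field k] [AddCommGroup V]
    [Module k V] [FiniteDimensional k V] [Nontrivial V] (a : Submodule k (Module.End k V))
    (hcomm : ∀ X ∈ a, ∀ Y ∈ a, Commute X Y) (hnil : ∀ X ∈ a, IsNilpotent X) :
    ∃ v ≠ (0 : V), ∀ X ∈ a, X v = 0 := by
  let L : LieSubalgebra k (Module.End k V) :=
    { a with
      lie_mem' := fun {X Y} hX hY => by
        rw [Ring.lie_def, (hcomm X hX Y hY).eq, sub_self]
        exact a.zero_mem }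
  have : LieModule.IsNilpotent L V :=
    (LieModule.isNilpotent_iff_forall' (R := k)).mpr fun X => hnil X.1 X.2
  have := LieModule.nontrivial_max_triv_of_isNilpotent k L V
  obtain ⟨⟨v, hv⟩, hv0⟩ := exists_ne (0 : LieModule.maxTrivSubmodule k L V)
  exact ⟨v, fun h => hv0 (by simp [h]), fun X hX => hv ⟨X, hX⟩⟩

namespace LinearMap.BilinForm

variable {k V : Type*} [Field k] [AddCommGroup V] [Module k V] {ω : LinearMap.BilinForm k V}

theorem two_mul_finrank_le_of_le_orthogonal [FiniteDimensional k V] (hω : ω.Nondegenerate)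
    {U : Submodule k V} (hU : U ≤ ω.orthogonal U) : 2 * finrank k U ≤ finrank k V := by
  have := finrank_mono hU
  rw [finrank_orthogonal hω] at this
  have := U.finrank_le
  omega

theorem span_singleton_le_orthogonal (hω : ω.IsAlt) (v : V) : k ∙ v ≤ ω.orthogonal (k ∙ v) := by
  intro x hx
  obtain ⟨c, rfl⟩ := mem_span_singleton.mp hx
  rw [mem_orthogonal_iff]
  intro y hy
  obtain ⟨d, rfl⟩ := mem_span_singleton.mp hy
  simp [hω.self_eq_zero]

theorem exists_apply_eq_one (hω : ω.SeparatingLeft) {v : V} (hv : v ≠ 0) : ∃ u, ω v u = 1 := by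
  obtain ⟨y, hy⟩ : ∃ y, ω v y ≠ 0 := by
    by_contra! h
    exact hv (hω v h)
  exact ⟨(ω v y)⁻¹ • y, by rw [map_smul, smul_eq_mul, inv_mul_cancel₀ hy]⟩

section Reduction

variable (ω U) in
abbrev Reduction := ω.orthogonal U ⧸ U.comap (ω.orthogonal U).subtype

variable (ω U) in
def reducedForm (hω : ω.IsRefl) : LinearMap.BilinForm k (ω.Reduction U) :=
  (ω.restrict (ω.orthogonal U)).liftQ₂ _ _ (fun w hw => by ext x; exact x.2 _ hw)
    (fun w hw => by ext x; exact hω _ _ (x.2 _ hw))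

variable {U : Submodule k V}

@[simp]
theorem reducedForm_mk (hω : ω.IsRefl) (w x : ω.orthogonal U) :
    ω.reducedForm U hω (Submodule.Quotient.mk w) (Submodule.Quotient.mk x) = ω w x := rfl

theorem isAlt_reducedForm (hω : ω.IsAlt) : (ω.reducedForm U hω.isRefl).IsAlt := by
  intro x
  obtain ⟨w, rfl⟩ := Submodule.Quotient.mk_surjective _ x
  exact hω w

theorem isRefl_reducedForm (hω : ω.IsRefl) : (ω.reducedForm U hω).IsRefl := by
  intro x y
  obtain ⟨w, rfl⟩ := Submodule.Quotient.mk_surjective _ x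
  obtain ⟨z, rfl⟩ := Submodule.Quotient.mk_surjective _ y
  exact hω w z

theorem nondegenerate_reducedForm [FiniteDimensional k V] (hω : ω.IsRefl) (hnd : ω.Nondegenerate) :
    (ω.reducedForm U hω).Nondegenerate := by
  refine (isRefl_reducedForm hω).nondegenerate_iff_separatingLeft.mpr fun x hx => ?_
  obtain ⟨w, rfl⟩ := Submodule.Quotient.mk_surjective _ x
  rw [Submodule.Quotient.mk_eq_zero, mem_comap, subtype_apply]
  refine (orthogonal_orthogonal hnd hω U).le fun y hy => ?_
  exact hω _ _ (hx (Submodule.Quotient.mk ⟨y, hy⟩))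

theorem finrank_reduction [FiniteDimensional k V] (hnd : ω.Nondegenerate)
    (hU : U ≤ ω.orthogonal U) : finrank k (ω.Reduction U) + 2 * finrank k U = finrank k V := by
  have hquot : finrank k (ω.Reduction U) + finrank k U = finrank k V - finrank k U := by
    have := Submodule.finrank_quotient_add_finrank (U.comap (ω.orthogonal U).subtype)
    rwa [(comapSubtypeEquivOfLe hU).finrank_eq, finrank_orthogonal hnd] at this
  have := two_mul_finrank_le_of_le_orthogonal hnd hU
  omega

variable (ω U) in
abbrev skewStabilizer : Submodule k (Module.End k V) :=
  LinearMap.skewAdjointSubmodule ω ⊓ U.compatibleMaps U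

theorem mapsTo_orthogonal {X : Module.End k V} (hX : X ∈ ω.skewStabilizer U) :
    ∀ w ∈ ω.orthogonal U, X w ∈ ω.orthogonal U := by
  intro w hw n hn
  have hskew := (mem_skewAdjointSubmodule X).mp hX.1 n w
  rw [hw _ (hX.2 hn), Pi.neg_apply, map_neg, eq_comm, neg_eq_zero] at hskew
  exact hskew

variable (ω U) in
def reduceEnd : ω.skewStabilizer U →ₗ[k] Module.End k (ω.Reduction U) where
  toFun X := (U.comap (ω.orthogonal U).subtype).mapQ _
    ((X : Module.End k V).restrict (mapsTo_orthogonal X.2)) fun _ hw => X.2.2 hw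
  map_add' _ _ := by ext; rfl
  map_smul' _ _ := by ext; rfl

theorem reduceEnd_mk (X : ω.skewStabilizer U) (w : ω.orthogonal U) :
    ω.reduceEnd U X (Submodule.Quotient.mk w) =
      Submodule.Quotient.mk ⟨(X : Module.End k V) w, mapsTo_orthogonal X.2 w w.2⟩ := rfl

theorem isSkewAdjoint_reduceEnd (hω : ω.IsRefl) (X : ω.skewStabilizer U) :
    (ω.reducedForm U hω).IsSkewAdjoint (ω.reduceEnd U X) := by
  intro x y
  obtain ⟨w, rfl⟩ := Submodule.Quotient.mk_surjective _ x
  obtain ⟨z, rfl⟩ := Submodule.Quotient.mk_surjective _ y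
  rw [Pi.neg_apply, reduceEnd_mk, reduceEnd_mk, ← Submodule.Quotient.mk_neg, reducedForm_mk,
    reducedForm_mk]
  exact (mem_skewAdjointSubmodule _).mp X.2.1 w z

theorem commute_reduceEnd {X Y : ω.skewStabilizer U} (h : Commute (X : Module.End k V) Y) :
    Commute (ω.reduceEnd U X) (ω.reduceEnd U Y) := by
  refine Submodule.linearMap_qext _ (LinearMap.ext fun w => ?_)
  simp only [LinearMap.comp_apply, mkQ_apply, Module.End.mul_apply, reduceEnd_mk]
  exact congr(Submodule.Quotient.mk (Subtype.mk ($h.eq w) _))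

theorem isNilpotent_reduceEnd {X : ω.skewStabilizer U} (h : IsNilpotent (X : Module.End k V)) :
    IsNilpotent (ω.reduceEnd U X) :=
  Module.End.IsNilpotent.mapQ (f := (X : Module.End k V).restrict (mapsTo_orthogonal X.2))
    (fun _ hw => X.2.2 hw)
    (Module.End.isNilpotent.restrict _ h)

theorem apply_mem_of_reduceEnd_eq_zero {X : ω.skewStabilizer U} (h : ω.reduceEnd U X = 0)
    {w : V} (hw : w ∈ ω.orthogonal U) : (X : Module.End k V) w ∈ U := by
  have := congr($h (Submodule.Quotient.mk ⟨w, hw⟩))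
  rwa [reduceEnd_mk, LinearMap.zero_apply, Submodule.Quotient.mk_eq_zero] at this

end Reduction

theorem mem_orthogonal_span_singleton_iff {v w : V} : w ∈ ω.orthogonal (k ∙ v) ↔ ω v w = 0 := by
  refine ⟨fun h => h v (mem_span_singleton_self v), fun h n hn => ?_⟩
  obtain ⟨c, rfl⟩ := mem_span_singleton.mp hn
  simp [h]

theorem two_mul_finrank_le_of_forall_mem_span_singleton [FiniteDimensional k V] (h2 : (2 : k) ≠ 0)
    (hω : ω.IsAlt) (hnd : ω.Nondegenerate) {v : V} (hv : v ≠ 0)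
    (K : Submodule k (Module.End k V)) (hskew : ∀ X ∈ K, ω.IsSkewAdjoint X)
    (hcomm : ∀ X ∈ K, ∀ Y ∈ K, Commute X Y)
    (hK : ∀ X ∈ K, ∀ w ∈ ω.orthogonal (k ∙ v), X w ∈ k ∙ v) :
    2 * finrank k K ≤ finrank k V := by
  obtain ⟨u, hu⟩ := exists_apply_eq_one hnd.1 hv
  let ev : K →ₗ[k] V := LinearMap.applyₗ u ∘ₗ K.subtype
  have hinj : Function.Injective ev := by
    refine (injective_iff_map_eq_zero ev).mpr fun ⟨X, hX⟩ hXu =>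
      Subtype.ext (LinearMap.ext fun z => ?_)
    change X u = 0 at hXu
    change X z = 0
    have hw : z - ω v z • u ∈ ω.orthogonal (k ∙ v) := by
      rw [mem_orthogonal_span_singleton_iff]
      simp [hu]
    obtain ⟨c, hc⟩ := mem_span_singleton.mp (hK X hX _ hw)
    have hc0 : c = 0 := by
      simpa [← hc, hu, hXu] using hskew X hX (z - ω v z • u) u
    calc X z = X (z - ω v z • u) + ω v z • X u := by rw [map_sub, map_smul, sub_add_cancel]
      _ = 0 := by rw [← hc, hc0, hXu, zero_smul, smul_zero, add_zero]
  have hiso : LinearMap.range ev ≤ ω.orthogonal (LinearMap.range ev) := by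
    rintro _ ⟨⟨X, hX⟩, rfl⟩ _ ⟨⟨Y, hY⟩, rfl⟩
    change ω (Y u) (X u) = 0
    have hXY := hskew X hX u (Y u)
    have hYX := hskew Y hY u (X u)
    rw [Pi.neg_apply, map_neg, ← Module.End.mul_apply, (hcomm X hX Y hY).eq] at hXY
    rw [Pi.neg_apply, map_neg, ← Module.End.mul_apply] at hYX
    have htwice : (2 : k) * ω (Y u) (X u) = 0 := by
      linear_combination hYX - hXY - LinearMap.IsAlt.neg hω (X u) (Y u)
    exact (mul_eq_zero.mp htwice).resolve_left h2
  calc 2 * finrank k K = 2 * finrank k (LinearMap.range ev) := by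
        rw [LinearMap.finrank_range_of_inj hinj]
    _ ≤ finrank k V := two_mul_finrank_le_of_le_orthogonal hnd hiso

theorem finrank_le_of_isSkewAdjoint_of_commute_of_isNilpotent [FiniteDimensional k V]
    (h2 : (2 : k) ≠ 0) (hω : ω.IsAlt) (hnd : ω.Nondegenerate) {N : ℕ}
    (hN : finrank k V = 2 * N) (a : Submodule k (Module.End k V))
    (hskew : ∀ X ∈ a, ω.IsSkewAdjoint X) (hcomm : ∀ X ∈ a, ∀ Y ∈ a, Commute X Y)
    (hnil : ∀ X ∈ a, IsNilpotent X) :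
    finrank k a ≤ N * (N + 1) / 2 := by
  induction N generalizing V with
  | zero =>
    have : Subsingleton V := finrank_zero_iff.mp hN
    simp [finrank_zero_of_subsingleton]
  | succ N ih =>
    have : Nontrivial V := nontrivial_of_finrank_pos (R := k) (by omega)
    obtain ⟨v, hv, hav⟩ := a.exists_ne_zero_forall_apply_eq_zero hcomm hnil
    have hle : a ≤ ω.skewStabilizer (k ∙ v) := fun X hX =>
      ⟨(mem_skewAdjointSubmodule X).mpr (hskew X hX),
        (span_singleton_le_iff_mem _ _).mpr (by simp [hav X hX])⟩
    let π := ω.reduceEnd (k ∙ v) ∘ₗ Submodule.inclusion hle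
    have hrange : finrank k (LinearMap.range π) ≤ N * (N + 1) / 2 := by
      refine ih (isAlt_reducedForm hω) (nondegenerate_reducedForm hω.isRefl hnd) ?_ _
        (by rintro _ ⟨X, rfl⟩; exact isSkewAdjoint_reduceEnd _ _)
        (by rintro _ ⟨X, rfl⟩ _ ⟨Y, rfl⟩; exact commute_reduceEnd (hcomm _ X.2 _ Y.2))
        (by rintro _ ⟨X, rfl⟩; exact isNilpotent_reduceEnd (hnil _ X.2))
      have := finrank_reduction hnd (span_singleton_le_orthogonal hω v)
      rw [finrank_span_singleton hv] at this
      omega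
    have hker : 2 * finrank k (LinearMap.ker π) ≤ finrank k V := by
      rw [← Submodule.finrank_map_subtype_eq]
      refine two_mul_finrank_le_of_forall_mem_span_singleton h2 hω hnd hv _ ?_ ?_ ?_
      · rintro _ ⟨X, -, rfl⟩
        exact hskew X X.2
      · rintro _ ⟨X, -, rfl⟩ _ ⟨Y, -, rfl⟩
        exact hcomm X X.2 Y Y.2
      · rintro _ ⟨X, hX, rfl⟩ w hw
        exact apply_mem_of_reduceEnd_eq_zero hX hw
    have hsplit := LinearMap.finrank_range_add_finrank_ker π
    have hsucc : (N + 1) * (N + 1 + 1) / 2 = N * (N + 1) / 2 + (N + 1) := by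
      rw [show (N + 1) * (N + 1 + 1) = N * (N + 1) + (N + 1) * 2 by ring,
        Nat.add_mul_div_right _ _ two_pos]
    omega

end LinearMap.BilinForm

namespace Matrix

theorem finrank_le_of_isSkewAdjoint_of_commute_of_isNilpotent {k ι : Type*} [Field k]
    [Fintype ι] [DecidableEq ι] (h2 : (2 : k) ≠ 0) {J : Matrix ι ι k}
    (hJ : (toLinearMap₂' k J : LinearMap.BilinForm k (ι → k)).IsAlt) (hdet : J.det ≠ 0) {N : ℕ}
    (hι : Fintype.card ι = 2 * N) (ε : Submodule k (Matrix ι ι k))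
    (hskew : ∀ X ∈ ε, J.IsSkewAdjoint X) (hcomm : ∀ X ∈ ε, ∀ Y ∈ ε, Commute X Y)
    (hnil : ∀ X ∈ ε, IsNilpotent X) :
    finrank k ε ≤ N * (N + 1) / 2 := by
  let e := toLinAlgEquiv' (R := k) (n := ι)
  rw [← LinearEquiv.finrank_map_eq e.toLinearEquiv ε]
  refine LinearMap.BilinForm.finrank_le_of_isSkewAdjoint_of_commute_of_isNilpotent h2 hJ
    (LinearMap.nondegenerate_toLinearMap₂'_of_det_ne_zero' hdet)
    (by rw [finrank_fintype_fun_eq_card, hι]) _ ?_ ?_ ?_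
  · rintro _ ⟨X, hX, rfl⟩
    have h := (isAdjointPair_toLinearMap₂' J J X (-X)).mpr (hskew X hX)
    rwa [map_neg, LinearMap.coe_neg] at h
  · rintro _ ⟨X, hX, rfl⟩ _ ⟨Y, hY, rfl⟩
    exact (hcomm X hX Y hY).map e
  · rintro _ ⟨X, hX, rfl⟩
    exact (hnil X hX).map e

variable (R ι : Type*)

def symmetricSubmodule [CommSemiring R] : Submodule R (Matrix ι ι R) where
  carrier := {B | B.IsSymm}
  add_mem' := IsSymm.add
  zero_mem' := isSymm_zero
  smul_mem' c _ h := h.smul c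

def symmetricSubmoduleEquiv [CommSemiring R] : symmetricSubmodule R ι ≃ₗ[R] (Sym2 ι → R) where
  toFun B := Sym2.lift ⟨fun i j => (B : Matrix ι ι R) i j, fun i j => (B.2.apply i j).symm⟩
  map_add' _ _ := by ext ⟨i, j⟩; rfl
  map_smul' _ _ := by ext ⟨i, j⟩; rfl
  invFun f := ⟨of fun i j => f s(i, j), IsSymm.ext fun i j => by simp [Sym2.eq_swap]⟩
  left_inv _ := rfl
  right_inv _ := by ext ⟨i, j⟩; rfl

theorem finrank_symmetricSubmodule [CommRing R] [StrongRankCondition R] [Fintype ι]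
    [DecidableEq ι] :
    finrank R (symmetricSubmodule R ι) = Fintype.card ι * (Fintype.card ι + 1) / 2 := by
  rw [(symmetricSubmoduleEquiv R ι).finrank_eq, finrank_fintype_fun_eq_card, Sym2.card,
    Nat.choose_two_right, Nat.add_sub_cancel, mul_comm]

variable (m n : Type*)

def fromUpperRightBlockₗ [Semiring R] : Matrix m n R →ₗ[R] Matrix (m ⊕ n) (m ⊕ n) R where
  toFun B := fromBlocks 0 B 0 0
  map_add' B C := by simp [fromBlocks_add]
  map_smul' c B := by simp [fromBlocks_smul]

variable {R m n}

theorem fromBlocks_zero_mul_fromBlocks_zero [Fintype m] [Fintype n] [Semiring R]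
    (B C : Matrix m n R) :
    fromBlocks 0 B 0 0 * fromBlocks 0 C 0 0 = (0 : Matrix (m ⊕ n) (m ⊕ n) R) := by
  simp [fromBlocks_multiply]

end Matrix

theorem isAlt_toLinearMap₂'_Jstd {k : Type*} [Field k] (n : ℕ) :
    (toLinearMap₂' k (Jstd k n) : LinearMap.BilinForm k _).IsAlt := by
  intro x
  simp [toLinearMap₂'_apply', Jstd, fromBlocks_mulVec, neg_mulVec, dotProduct,
    Fintype.sum_sum_type, mul_comm]

theorem det_Jstd_ne_zero {k : Type*} [Field k] (n : ℕ) : (Jstd k n).det ≠ 0 := by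
  refine (isUnit_det_of_left_inverse (B := -Jstd k n) ?_).ne_zero
  simp [Jstd, fromBlocks_multiply, fromBlocks_neg, fromBlocks_one]

theorem fromBlocks_transpose_mul_Jstd_add_Jstd_mul {k : Type*} [Field k] {n : ℕ}
    {B : Matrix (Fin n) (Fin n) k} (hB : Bᵀ = B) :
    (fromBlocks 0 B 0 0)ᵀ * Jstd k n + Jstd k n * fromBlocks 0 B 0 0 = 0 := by
  simp [Jstd, fromBlocks_transpose, fromBlocks_multiply, fromBlocks_add, hB]

def symBlockLieSubalgebra (k : Type*) [Field k] (n : ℕ) :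
    LieSubalgebra k (Matrix (Fin n ⊕ Fin n) (Fin n ⊕ Fin n) k) :=
  { (symmetricSubmodule k (Fin n)).map (fromUpperRightBlockₗ k (Fin n) (Fin n)) with
    lie_mem' := by
      rintro _ _ ⟨B, -, rfl⟩ ⟨C, -, rfl⟩
      simp only [Ring.lie_def, fromUpperRightBlockₗ, LinearMap.coe_mk, AddHom.coe_mk,
        fromBlocks_zero_mul_fromBlocks_zero, sub_zero]
      exact Submodule.zero_mem _ }

theorem mem_symBlockLieSubalgebra {k : Type*} [Field k] {n : ℕ}
    {X : Matrix (Fin n ⊕ Fin n) (Fin n ⊕ Fin n) k} :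
    X ∈ symBlockLieSubalgebra k n ↔ X ∈ symBlockSet k n :=
  ⟨fun ⟨B, hB, h⟩ => ⟨B, hB, h.symm⟩, fun ⟨B, hB, h⟩ => ⟨B, hB, h.symm⟩⟩

theorem finrank_symBlockLieSubalgebra (k : Type*) [Field k] (n : ℕ) :
    finrank k (symBlockLieSubalgebra k n) = n * (n + 1) / 2 := by
  have hinj : Function.Injective (fromUpperRightBlockₗ k (Fin n) (Fin n)) := fun B C h =>
    (fromBlocks_inj.mp h).2.1
  calc finrank k (symBlockLieSubalgebra k n) = finrank k (symmetricSubmodule k (Fin n)) :=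
      (Submodule.equivMapOfInjective _ hinj _).finrank_eq.symm
    _ = n * (n + 1) / 2 := by rw [finrank_symmetricSubmodule, Fintype.card_fin]

theorem stmt_7_general {k : Type*} [Field k] {p : ℕ} [Fact p.Prime] [CharP k p]
    (hp : p ≠ 2) (n : ℕ) :
    (∀ ε : LieSubalgebra k (Matrix (Fin n ⊕ Fin n) (Fin n ⊕ Fin n) k),
       (∀ X ∈ ε, Xᵀ * Jstd k n + Jstd k n * X = 0) →
       (∀ X ∈ ε, ∀ Y ∈ ε, ⁅X, Y⁆ = 0) →
       (∀ X ∈ ε, X ^ p = 0) →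
       Module.finrank k ε ≤ n * (n + 1) / 2)
    ∧
    (∃ ε : LieSubalgebra k (Matrix (Fin n ⊕ Fin n) (Fin n ⊕ Fin n) k),
       (ε : Set (Matrix (Fin n ⊕ Fin n) (Fin n ⊕ Fin n) k)) = symBlockSet k n ∧
       (∀ X ∈ ε, Xᵀ * Jstd k n + Jstd k n * X = 0) ∧
       (∀ X ∈ ε, ∀ Y ∈ ε, ⁅X, Y⁆ = 0) ∧
       (∀ X ∈ ε, X ^ p = 0) ∧
       Module.finrank k ε = n * (n + 1) / 2) := by
  have h2 : (2 : k) ≠ 0 := Ring.two_ne_zero (by rwa [ringChar.eq k p])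
  have hp2 : 2 ≤ p := (Fact.out : p.Prime).two_le
  refine ⟨fun ε hsp hab hpow => ?_, symBlockLieSubalgebra k n,
    Set.ext fun _ => mem_symBlockLieSubalgebra, ?_, ?_, ?_, finrank_symBlockLieSubalgebra k n⟩
  · refine Matrix.finrank_le_of_isSkewAdjoint_of_commute_of_isNilpotent h2
      (isAlt_toLinearMap₂'_Jstd n) (det_Jstd_ne_zero n) (by simp [two_mul]) ε.toSubmodule
      (fun X hX => ?_)
      (fun X hX Y hY => sub_eq_zero.mp (hab X hX Y hY)) (fun X hX => ⟨p, hpow X hX⟩)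
    rw [Matrix.IsSkewAdjoint, Matrix.IsAdjointPair, mul_neg, ← sub_eq_zero, sub_neg_eq_add]
    exact hsp X hX
  · rintro X hX
    obtain ⟨B, hB, rfl⟩ := mem_symBlockLieSubalgebra.mp hX
    exact fromBlocks_transpose_mul_Jstd_add_Jstd_mul hB
  · rintro X hX Y hY
    obtain ⟨B, -, rfl⟩ := mem_symBlockLieSubalgebra.mp hX
    obtain ⟨C, -, rfl⟩ := mem_symBlockLieSubalgebra.mp hY
    rw [Ring.lie_def, fromBlocks_zero_mul_fromBlocks_zero, fromBlocks_zero_mul_fromBlocks_zero,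
      sub_zero]
  · rintro X hX
    obtain ⟨B, -, rfl⟩ := mem_symBlockLieSubalgebra.mp hX
    exact pow_eq_zero_of_le hp2 (by rw [sq, fromBlocks_zero_mul_fromBlocks_zero])

/-- every elementary subalgebra of `sp_{2n}(k)` (char `p ≠ 2`) has
dimension at most `n(n+1)/2`, and the bound is attained by the subalgebra of
matrices `[[0, B],[0, 0]]` with `B` symmetric. -/
theorem stmt_7 {k : Type*} [Field k] [IsAlgClosed k] {p : ℕ} [Fact p.Prime] [CharP k p]
    (hp : p ≠ 2) (n : ℕ) (hn : 1 ≤ n) :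
    (∀ ε : LieSubalgebra k (Matrix (Fin n ⊕ Fin n) (Fin n ⊕ Fin n) k),
       (∀ X ∈ ε, Xᵀ * Jstd k n + Jstd k n * X = 0) →
       (∀ X ∈ ε, ∀ Y ∈ ε, ⁅X, Y⁆ = 0) →
       (∀ X ∈ ε, X ^ p = 0) →
       Module.finrank k ε ≤ n * (n + 1) / 2)
    ∧
    (∃ ε : LieSubalgebra k (Matrix (Fin n ⊕ Fin n) (Fin n ⊕ Fin n) k),
       (ε : Set (Matrix (Fin n ⊕ Fin n) (Fin n ⊕ Fin n) k)) = symBlockSet k n ∧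
       (∀ X ∈ ε, Xᵀ * Jstd k n + Jstd k n * X = 0) ∧
       (∀ X ∈ ε, ∀ Y ∈ ε, ⁅X, Y⁆ = 0) ∧
       (∀ X ∈ ε, X ^ p = 0) ∧
       Module.finrank k ε = n * (n + 1) / 2) :=
  stmt_7_general hp n
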